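/- (Single-coordinate mixing lemma.) Fix integers d ≥ 1 and M ≥ 3 with M odd, and let P be the lifted Markov chain on C×V = (Fin d × {+1,−1}) × (ZMod M)^d with parameter α = 1/(2dM). Let the initial distribution p₀ be concentrated on a single lifted state ((k,s),v) ∈ C×V. Then for every n ∈ ZMod M, the distribution p_{2M} = P^{2M} p₀ satisfies ∑_{(c,w) ∈ C×V : w_k = n} p_{2M}(c,w) ≥ 1/(16·d·M); that is, after 2M steps the k-th coordinate is uniformly mixed up to a factor 1/(16d). -/

import Mathlib

open Finset

/-- `p` is a probability distribution on the finite set `S`. -/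
def IsProbDist {S : Type*} [Fintype S] (p : S → ℝ) : Prop :=
  (∀ s, 0 ≤ p s) ∧ ∑ s, p s = 1

/-- Total variation distance `‖p - q‖_TV = (1/2) ∑_s |p s - q s|`. -/
noncomputable def tvDist {S : Type*} [Fintype S] (p q : S → ℝ) : ℝ :=
  (1/2) * ∑ s, |p s - q s|

/-- Action of a matrix on a distribution: `(P p)(s') = ∑_s P s' s * p s`. -/
def matVec {S : Type*} [Fintype S] (P : S → S → ℝ) (p : S → ℝ) : S → ℝ :=
  fun s' => ∑ s, P s' s * p s

/-- The coin set `C = Fin d × {+1,−1}` (a coordinate axis and a direction). -/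
abbrev TorusCoin (d : ℕ) := Fin d × ℤˣ

/-- The `d`-dimensional discrete torus of side `M`. -/
abbrev Torus (d M : ℕ) := Fin d → ZMod M

/-- The coin-toss matrix `S̄` on `C`: `S̄(c',c) = 1 − (2d−1)α` if `c' = c`, else `α`. -/
noncomputable def coinToss (d : ℕ) (α : ℝ) : TorusCoin d → TorusCoin d → ℝ :=
  fun c' c => if c' = c then 1 - (2*(d : ℝ) - 1)*α else α

/-- The lifted Markov chain transition matrix on `C × V`:
`P(((k',s'),v'),((k,s),v)) = S̄((k',s'),(k,s))` if `v' = v + s'·e_{k'}`, else `0`. -/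
noncomputable def torusP (d M : ℕ) (α : ℝ) :
    (TorusCoin d × Torus d M) → (TorusCoin d × Torus d M) → ℝ :=
  fun x' x =>
    if x'.2 = x.2 + (fun j => if j = x'.1.1 then ((x'.1.2 : ℤ) : ZMod M) else 0)
    then coinToss d α x'.1 x.1 else 0

/-!
Follow the paths of length `2M` from `((k, s), v)` that keep the coin `(k, s)` for `a` steps and
then switch once, to `(k, -s)`, for the remaining steps. Each has probability `α β ^ (2M - 1)`,
where `β = 1 - (2d - 1) α ≥ 1 - 1/M`, so that `β ^ (2M - 1) ≥ 1/16`; it ends at `k`-th coordinate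
`v k + 2 s a`. Since `M` is odd, `2 s` is invertible modulo `M`, so every residue `n` is reached by
two of the `2M` values of `a`, which gives mass at least `2 α / 16 = 1 / (16 d M)` at `n`.
Since the transition matrix is nonnegative, the mass carried by these paths is a sub-solution of
the evolution and therefore bounds `P ^ (2M) p₀` from below.
-/

theorem one_div_sixteen_le_one_sub_one_div_pow {M : ℕ} (hM : 3 ≤ M) :
    1 / 16 ≤ (1 - 1 / (M : ℝ)) ^ (2 * M - 1) := by
  obtain ⟨m, rfl⟩ : ∃ m, M = m + 1 := ⟨M - 1, by omega⟩
  have hm : (2 : ℝ) ≤ m := by exact_mod_cast (by omega : 2 ≤ m)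
  have hbase : 1 - 1 / ((m + 1 : ℕ) : ℝ) = (1 + (m : ℝ)⁻¹)⁻¹ := by
    push_cast; field_simp; ring
  have hexp : (1 + (m : ℝ)⁻¹) ^ m ≤ 3 :=
    Real.one_add_inv_pow_le_exp.trans Real.exp_one_lt_three.le
  have hinv : (m : ℝ)⁻¹ ≤ 1 / 2 := by rw [inv_le_comm₀ (by positivity) (by norm_num)]; linarith
  have hpow : (1 + (m : ℝ)⁻¹) ^ (2 * (m + 1) - 1) ≤ 16 := by
    rw [show 2 * (m + 1) - 1 = m + m + 1 by omega, pow_succ, pow_add]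
    have h0 : 0 ≤ (1 + (m : ℝ)⁻¹) ^ m := by positivity
    nlinarith [mul_le_mul hexp hexp h0 (by norm_num)]
  rw [hbase, inv_pow, one_div]
  exact inv_anti₀ (by positivity) hpow

theorem two_le_card_filter_natCast_eq {M : ℕ} [NeZero M] (b : ZMod M) :
    2 ≤ #{a ∈ range (2 * M) | ((a : ℕ) : ZMod M) = b} := by
  have hb := ZMod.val_lt b
  have hsub : {b.val, b.val + M} ⊆ {a ∈ range (2 * M) | ((a : ℕ) : ZMod M) = b} := by
    intro a ha
    simp only [mem_insert, mem_singleton] at ha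
    rcases ha with rfl | rfl <;> simp [mem_filter] <;> omega
  calc 2 = #{b.val, b.val + M} := (card_pair (by omega)).symm
    _ ≤ _ := card_le_card hsub

theorem sum_sum_single_apply {S ι : Type*} [DecidableEq S] (F : Finset S) (A : Finset ι)
    (y : ι → S) : ∑ x ∈ F, (∑ a ∈ A, Pi.single (y a) (1 : ℝ)) x = #{a ∈ A | y a ∈ F} := by
  simp only [Finset.sum_apply, Pi.single_apply]
  rw [sum_comm]
  simp

section matVec

variable {S : Type*} [Fintype S]

theorem matVec_eq_mulVec (P : S → S → ℝ) : matVec P = (Matrix.of P).mulVec := rfl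

theorem matVec_single_one [DecidableEq S] (P : S → S → ℝ) (y : S) :
    matVec P (Pi.single y 1) = fun x => P x y :=
  Matrix.mulVec_single_one (Matrix.of P) y

theorem matVec_mono {P : S → S → ℝ} (hP : ∀ x y, 0 ≤ P x y) : Monotone (matVec P) :=
  fun _ _ h x => sum_le_sum fun y _ => mul_le_mul_of_nonneg_left (h y) (hP x y)

theorem le_iterate_matVec {P : S → S → ℝ} (hP : ∀ x y, 0 ≤ P x y) {g : ℕ → S → ℝ}
    (hg : ∀ t, g (t + 1) ≤ matVec P (g t)) (t : ℕ) : g t ≤ (matVec P)^[t] (g 0) :=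
  (matVec_mono hP).seq_le_seq (y := fun t => (matVec P)^[t] (g 0)) t le_rfl
    (fun t _ => hg t) (fun _ _ => (Function.iterate_succ_apply' _ _ _).ge)

end matVec

namespace TorusWalk

variable {d M : ℕ}

def dir (c : TorusCoin d) : Torus d M := Pi.single c.1 ((c.2 : ℤ) : ZMod M)

theorem dir_neg (k : Fin d) (s : ℤˣ) : (dir (k, -s) : Torus d M) = -dir (k, s) := by
  simp [dir, Pi.single_neg]

def stayProb (d : ℕ) (α : ℝ) : ℝ := 1 - (2 * (d : ℝ) - 1) * α

theorem coinToss_self (α : ℝ) (c : TorusCoin d) : coinToss d α c c = stayProb d α := if_pos rfl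

theorem coinToss_nonneg {α : ℝ} (hα : 0 ≤ α) (hβ : 0 ≤ stayProb d α) (c' c : TorusCoin d) :
    0 ≤ coinToss d α c' c := by
  unfold coinToss; split_ifs <;> assumption

theorem one_sub_one_div_le_stayProb (d M : ℕ) :
    1 - 1 / (M : ℝ) ≤ stayProb d (1 / (2 * d * M)) := by
  have h : (2 * d : ℝ) * (1 / (2 * d * M)) ≤ 1 / M := by
    rw [mul_one_div, div_mul_eq_div_div]
    exact div_le_div_of_nonneg_right (div_self_le_one _) (Nat.cast_nonneg M)
  have : (2 * d - 1 : ℝ) * (1 / (2 * d * M)) ≤ 2 * d * (1 / (2 * d * M)) :=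
    mul_le_mul_of_nonneg_right (by linarith) (by positivity)
  simp only [stayProb]
  linarith

theorem stayProb_nonneg (d M : ℕ) : 0 ≤ stayProb d (1 / (2 * d * M)) :=
  (Nat.one_sub_one_div_cast_nonneg M).trans (one_sub_one_div_le_stayProb d M)

theorem one_div_sixteen_le_stayProb_pow (d : ℕ) {M : ℕ} (hM : 3 ≤ M) :
    1 / 16 ≤ stayProb d (1 / (2 * d * M)) ^ (2 * M - 1) :=
  (one_div_sixteen_le_one_sub_one_div_pow hM).trans <|
    pow_le_pow_left₀ (Nat.one_sub_one_div_cast_nonneg M) (one_sub_one_div_le_stayProb d M) _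

theorem torusP_apply (α : ℝ) (x' x : TorusCoin d × Torus d M) :
    torusP d M α x' x = if x'.2 = x.2 + dir x'.1 then coinToss d α x'.1 x.1 else 0 := by
  simp only [torusP, dir]
  congr 3
  funext j
  simp [Pi.single_apply]

theorem torusP_nonneg {α : ℝ} (hα : 0 ≤ α) (hβ : 0 ≤ stayProb d α)
    (x' x : TorusCoin d × Torus d M) : 0 ≤ torusP d M α x' x := by
  rw [torusP_apply]
  split_ifs
  exacts [coinToss_nonneg hα hβ _ _, le_rfl]

section paths

variable (k : Fin d) (s : ℤˣ) (v : Torus d M)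

def straightState (t : ℕ) : TorusCoin d × Torus d M :=
  ((k, s), v + (t : ℤ) • dir (k, s))

/-- The end of the path of length `t` that takes `a` steps with coin `(k, s)`, then `t - a` steps
with coin `(k, -s)`. -/
def reversedState (t a : ℕ) : TorusCoin d × Torus d M :=
  ((k, -s), v + (2 * a - t : ℤ) • dir (k, s))

theorem straightState_succ (t : ℕ) :
    straightState k s v (t + 1) = ((k, s), (straightState k s v t).2 + dir (k, s)) := by
  refine Prod.ext rfl ?_
  simp only [straightState]
  push_cast
  module

theorem reversedState_succ (t a : ℕ) :
    reversedState k s v (t + 1) a = ((k, -s), (reversedState k s v t a).2 + dir (k, -s)) := by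
  refine Prod.ext rfl ?_
  simp only [reversedState, dir_neg]
  push_cast
  module

theorem reversedState_succ_self (t : ℕ) :
    reversedState k s v (t + 1) t = ((k, -s), (straightState k s v t).2 + dir (k, -s)) := by
  refine Prod.ext rfl ?_
  simp only [reversedState, straightState, dir_neg]
  push_cast
  module

theorem reversedState_two_mul_apply (a : ℕ) :
    (reversedState k s v (2 * M) a).2 k = v k + 2 * s * a := by
  simp [reversedState, dir]
  ring

/-- The mass that the chain started at `((k, s), v)` carries after `t` steps along the paths that
switch coin at most once, from `(k, s)` to `(k, -s)`. -/
noncomputable def oneTurnMass (α : ℝ) (t : ℕ) : TorusCoin d × Torus d M → ℝ :=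
  stayProb d α ^ t • Pi.single (straightState k s v t) 1 +
    (α * stayProb d α ^ (t - 1)) • ∑ a ∈ range t, Pi.single (reversedState k s v t a) 1

theorem oneTurnMass_zero (α : ℝ) : oneTurnMass k s v α 0 = Pi.single ((k, s), v) 1 := by
  simp [oneTurnMass, straightState]

theorem mul_card_le_sum_oneTurnMass {α : ℝ} (hβ : 0 ≤ stayProb d α) (t : ℕ)
    (F : Finset (TorusCoin d × Torus d M)) :
    α * stayProb d α ^ (t - 1) * #{a ∈ range t | reversedState k s v t a ∈ F} ≤
      ∑ x ∈ F, oneTurnMass k s v α t x := by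
  have hstraight : 0 ≤ stayProb d α ^ t • Pi.single (straightState k s v t) (1 : ℝ) :=
    smul_nonneg (pow_nonneg hβ t) (Pi.single_nonneg.2 zero_le_one)
  have := sum_nonneg fun x (_ : x ∈ F) => hstraight x
  simp only [oneTurnMass, Pi.add_apply, Pi.smul_apply, smul_eq_mul, sum_add_distrib, ← mul_sum,
    sum_sum_single_apply] at this ⊢
  linarith

end paths

variable [NeZero M] {k : Fin d} {s : ℤˣ} {v : Torus d M} {α : ℝ}

theorem matVec_torusP_single (c : TorusCoin d) (w : Torus d M) :
    matVec (torusP d M α) (Pi.single (c, w) 1) =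
      ∑ c', coinToss d α c' c • Pi.single (c', w + dir c') 1 := by
  rw [matVec_single_one]
  funext ⟨c', w'⟩
  simp only [Finset.sum_apply, Pi.smul_apply, Pi.single_apply, Prod.mk.injEq, ite_and, smul_eq_mul,
    mul_ite, mul_one, mul_zero, sum_ite_eq, mem_univ, if_true, torusP_apply]

theorem sum_coinToss_smul_single_le_matVec (hα : 0 ≤ α) (hβ : 0 ≤ stayProb d α)
    (c : TorusCoin d) (w : Torus d M) (C : Finset (TorusCoin d)) :
    ∑ c' ∈ C, coinToss d α c' c • Pi.single (c', w + dir c') (1 : ℝ) ≤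
      matVec (torusP d M α) (Pi.single (c, w) 1) := by
  rw [matVec_torusP_single]
  exact sum_le_sum_of_subset_of_nonneg (subset_univ C) fun c' _ _ =>
    smul_nonneg (coinToss_nonneg hα hβ _ _) (Pi.single_nonneg.2 zero_le_one)

theorem le_matVec_single_straightState (hα : 0 ≤ α) (hβ : 0 ≤ stayProb d α) (t : ℕ) :
    stayProb d α • Pi.single (straightState k s v (t + 1)) 1 +
        α • Pi.single (reversedState k s v (t + 1) t) 1 ≤
      matVec (torusP d M α) (Pi.single (straightState k s v t) 1) := by
  have hne : ((k, s) : TorusCoin d) ≠ (k, -s) := by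
    simp [Prod.ext_iff, units_ne_neg_self s]
  have := sum_coinToss_smul_single_le_matVec hα hβ (k, s) (straightState k s v t).2
    {(k, s), (k, -s)}
  rwa [sum_pair hne, coinToss_self, coinToss, if_neg hne.symm, ← straightState_succ,
    ← reversedState_succ_self] at this

theorem le_matVec_single_reversedState (hα : 0 ≤ α) (hβ : 0 ≤ stayProb d α) (t a : ℕ) :
    stayProb d α • Pi.single (reversedState k s v (t + 1) a) 1 ≤
      matVec (torusP d M α) (Pi.single (reversedState k s v t a) 1) := by
  have := sum_coinToss_smul_single_le_matVec hα hβ (k, -s) (reversedState k s v t a).2 {(k, -s)}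
  rwa [sum_singleton, coinToss_self, ← reversedState_succ] at this

theorem oneTurnMass_succ_le (hα : 0 ≤ α) (hβ : 0 ≤ stayProb d α) (t : ℕ) :
    oneTurnMass k s v α (t + 1) ≤ matVec (torusP d M α) (oneTurnMass k s v α t) := by
  set β := stayProb d α
  have hlin : matVec (torusP d M α) (oneTurnMass k s v α t) =
      β ^ t • matVec (torusP d M α) (Pi.single (straightState k s v t) 1) +
        (α * β ^ (t - 1)) • ∑ a ∈ range t,
          matVec (torusP d M α) (Pi.single (reversedState k s v t a) 1) := by
    simp only [oneTurnMass, matVec_eq_mulVec, Matrix.mulVec_add, Matrix.mulVec_smul,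
      Matrix.mulVec_sum]
    rfl
  calc oneTurnMass k s v α (t + 1)
      = β ^ t • (β • Pi.single (straightState k s v (t + 1)) 1 +
            α • Pi.single (reversedState k s v (t + 1) t) 1) +
          (α * β ^ (t - 1)) • ∑ a ∈ range t, β • Pi.single (reversedState k s v (t + 1) a) 1 := by
        -- at `t = 0` the truncated exponent `t - 1` is harmless: the sum over `range 0` is empty
        rcases t with _ | t
        · simp [oneTurnMass, β]
        · simp only [oneTurnMass, sum_range_succ, ← smul_sum, Nat.add_sub_cancel]
          module
    _ ≤ _ := by
        rw [hlin]
        gcongr with a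
        · exact le_matVec_single_straightState hα hβ t
        · exact le_matVec_single_reversedState hα hβ t a

theorem two_le_card_reversedState_apply_eq (hM : Odd M) (n : ZMod M) :
    2 ≤ #{a ∈ range (2 * M) | (reversedState k s v (2 * M) a).2 k = n} := by
  have h2 : IsUnit (2 : ZMod M) := by
    simpa using (ZMod.isUnit_iff_coprime 2 M).2 (Nat.coprime_two_left.2 hM)
  obtain ⟨u, hu⟩ := h2.mul (s.isUnit.map (Int.castRingHom (ZMod M)))
  refine (two_le_card_filter_natCast_eq (((u⁻¹ : (ZMod M)ˣ) : ZMod M) * (n - v k))).trans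
    (card_le_card (monotone_filter_right _ fun a _ (ha : ((a : ℕ) : ZMod M) = _) => ?_))
  rw [reversedState_two_mul_apply, ha, ← eq_intCast (Int.castRingHom (ZMod M)), ← hu,
    Units.mul_inv_cancel_left, add_sub_cancel]

end TorusWalk

open TorusWalk

open scoped Classical in
theorem torus_single_coordinate_mixing_general
    (d M : ℕ) [NeZero M] (hM : 3 ≤ M) (hModd : Odd M)
    (k : Fin d) (s : ℤˣ) (v : Torus d M) (n : ZMod M) :
    1/(16*(d : ℝ)*(M : ℝ)) ≤
      ∑ x : TorusCoin d × Torus d M,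
        (if x.2 k = n then
          (matVec (torusP d M (1/(2*(d : ℝ)*(M : ℝ)))))^[2*M]
            (fun y => if y = ((k, s), v) then 1 else 0) x
        else 0) := by
  set α : ℝ := 1 / (2 * d * M)
  have hβ : 0 ≤ stayProb d α := stayProb_nonneg d M
  have hα : 0 ≤ α := by positivity
  have hmass := le_iterate_matVec (torusP_nonneg (M := M) hα hβ)
    (oneTurnMass_succ_le (k := k) (s := s) (v := v) hα hβ) (2 * M)
  have hstart : (fun y => if y = ((k, s), v) then 1 else 0) = oneTurnMass k s v α 0 := by
    rw [oneTurnMass_zero]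
    funext y
    simp [Pi.single_apply]
  rw [← sum_filter, hstart]
  calc 1 / (16 * (d : ℝ) * M) = α * (1 / 16) * 2 := by simp only [α]; ring
    _ ≤ α * stayProb d α ^ (2 * M - 1) * 2 := by gcongr; exact one_div_sixteen_le_stayProb_pow d hM
    _ ≤ α * stayProb d α ^ (2 * M - 1) *
          #{a ∈ range (2 * M) | (reversedState k s v (2 * M) a).2 k = n} := by
        gcongr
        exact_mod_cast two_le_card_reversedState_apply_eq hModd n
    _ = α * stayProb d α ^ (2 * M - 1) *
          #{a ∈ range (2 * M) | reversedState k s v (2 * M) a ∈ ({x | x.2 k = n} : Finset _)} := by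
        simp only [mem_filter, mem_univ, true_and]
    _ ≤ ∑ x with x.2 k = n, oneTurnMass k s v α (2 * M) x :=
        mul_card_le_sum_oneTurnMass k s v hβ _ _
    _ ≤ _ := sum_le_sum fun x _ => hmass x

open scoped Classical in
/-- Single-coordinate mixing lemma: starting from a single lifted
state `((k,s),v)`, after `2M` steps of the torus lifted Markov chain the `k`-th
coordinate is uniformly mixed up to a factor `1/(16d)`: each value `n` has probability
at least `1/(16dM)`. -/
theorem torus_single_coordinate_mixing
    (d M : ℕ) [NeZero M] (hd : 1 ≤ d) (hM : 3 ≤ M) (hModd : Odd M)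
    (k : Fin d) (s : ℤˣ) (v : Torus d M) (n : ZMod M) :
    1/(16*(d : ℝ)*(M : ℝ)) ≤
      ∑ x : TorusCoin d × Torus d M,
        (if x.2 k = n then
          (matVec (torusP d M (1/(2*(d : ℝ)*(M : ℝ)))))^[2*M]
            (fun y => if y = ((k, s), v) then 1 else 0) x
        else 0) :=
  torus_single_coordinate_mixing_general d M hM hModd k s v n
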